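/- arXiv:2212.07880 — 4 statements merged into one kernel-verified Lean document; each statement's English description precedes it below -/
import Mathlib

section
/- For every real p ∈ [0,1] with q = 1 - p and every integer k ≥ 3, one has (1 - p^k - q^k)/k ≤ (1 - p^{k-1} - q^{k-1})/(k-1) - ((2^k - 2k - 2)/(k(k-1)))·(pq)^{k/2}. -/
open Finset

private lemma amgm' {a b : ℝ} (ha : 0 ≤ a) (hb : 0 ≤ b) :
    2 * Real.sqrt (a * b) ≤ a + b := by
  nlinarith [sq_nonneg (Real.sqrt a - Real.sqrt b), Real.sq_sqrt ha, Real.sq_sqrt hb,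
    Real.sqrt_mul ha b, Real.sqrt_nonneg a, Real.sqrt_nonneg b]

theorem stmt_0 (p : ℝ) (hp0 : 0 ≤ p) (hp1 : p ≤ 1) (q : ℝ) (hq : q = 1 - p)
    (k : ℕ) (hk : 3 ≤ k) :
    (1 - p ^ k - q ^ k) / (k : ℝ) ≤
      (1 - p ^ (k - 1) - q ^ (k - 1)) / ((k : ℝ) - 1) -
        ((2 : ℝ) ^ k - 2 * (k : ℝ) - 2) / ((k : ℝ) * ((k : ℝ) - 1)) *
          (p * q) ^ ((k : ℝ) / 2) := by
  obtain ⟨m, rfl⟩ : ∃ m, k = m + 3 := ⟨k - 3, by omega⟩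
  have hq0 : 0 ≤ q := by rw [hq]; linarith
  have hpq : p + q = 1 := by rw [hq]; ring
  have hpq0 : 0 ≤ p * q := mul_nonneg hp0 hq0
  set t : ℝ := (p * q) ^ (((m + 3 : ℕ) : ℝ) / 2) with ht
  have ht' : t = Real.sqrt ((p * q) ^ (m + 3)) := by
    rw [Real.sqrt_eq_rpow, ← Real.rpow_natCast (p * q) (m + 3), ← Real.rpow_mul hpq0, ht]
    congr 1
    push_cast
    ring
  have ht0 : 0 ≤ t := ht' ▸ Real.sqrt_nonneg _
  -- splitting helper
  have split : ∀ F : ℕ → ℝ, ∑ i ∈ range (m + 4), F i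
      = F 0 + F 1 + ∑ i ∈ Ico 2 (m + 2), F i + (F (m + 2) + F (m + 3)) := by
    intro F
    rw [range_eq_Ico,
      ← Finset.sum_Ico_consecutive F (by omega : 0 ≤ 2) (by omega : 2 ≤ m + 4),
      ← Finset.sum_Ico_consecutive F (by omega : 2 ≤ m + 2) (by omega : m + 2 ≤ m + 4)]
    have h1 : ∑ i ∈ Ico 0 2, F i = F 0 + F 1 := by
      rw [← range_eq_Ico]
      simp [Finset.sum_range_succ]
    have h2 : ∑ i ∈ Ico (m + 2) (m + 4), F i = F (m + 2) + F (m + 3) := by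
      rw [show m + 4 = (m + 3) + 1 from rfl, Finset.sum_Ico_succ_top (by omega),
        show m + 3 = (m + 2) + 1 from rfl, Finset.sum_Ico_succ_top (by omega)]
      simp
    rw [h1, h2]; ring
  -- the binomial sum
  set f : ℕ → ℝ := fun i => ((m + 3).choose i : ℝ) * (p ^ i * q ^ (m + 3 - i)) with hf
  have hbin : ∑ i ∈ range (m + 4), f i = 1 := by
    have h := add_pow p q (m + 3)
    rw [hpq, one_pow] at h
    rw [show ∑ i ∈ range (m + 4), f i = ∑ i ∈ range ((m+3) + 1),
        p ^ i * q ^ (m + 3 - i) * ((m + 3).choose i : ℝ) from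
      Finset.sum_congr rfl (fun i _ => by rw [hf]; ring)]
    exact h.symm
  have hf0 : f 0 = q ^ (m + 3) := by simp [hf]
  have hf1 : f 1 = ((m : ℝ) + 3) * (p * q ^ (m + 2)) := by
    rw [hf]
    simp only [Nat.choose_one_right, pow_one, show m + 3 - 1 = m + 2 by omega]
    push_cast; ring
  have hc2 : (m + 3).choose (m + 2) = m + 3 := by
    rw [show m + 3 = (m + 2) + 1 by omega]
    exact Nat.choose_succ_self_right _
  have hf2 : f (m + 2) = ((m : ℝ) + 3) * (p ^ (m + 2) * q) := by
    rw [hf]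
    simp only [hc2, show m + 3 - (m + 2) = 1 by omega, pow_one]
    push_cast; ring
  have hf3 : f (m + 3) = p ^ (m + 3) := by
    simp [hf, show m + 3 - (m + 3) = 0 by omega]
  have hS : ∑ i ∈ Ico 2 (m + 2), f i
      = 1 - q ^ (m + 3) - p ^ (m + 3) - ((m : ℝ) + 3) * (p * q ^ (m + 2))
        - ((m : ℝ) + 3) * (p ^ (m + 2) * q) := by
    have := split f
    rw [hbin, hf0, hf1, hf2, hf3] at this
    linarith
  -- coefficient sum
  have hC : ∑ i ∈ Ico 2 (m + 2), ((m + 3).choose i : ℝ)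
      = 2 ^ (m + 3) - 2 * ((m : ℝ) + 3) - 2 := by
    have h := split (fun i => ((m + 3).choose i : ℝ))
    have h2 : ∑ i ∈ range (m + 4), ((m + 3).choose i : ℝ) = 2 ^ (m + 3) := by
      rw [show m + 4 = (m + 3) + 1 from rfl]
      exact_mod_cast congrArg (Nat.cast : ℕ → ℝ) (Nat.sum_range_choose (m + 3))
    rw [h2] at h
    simp only [Nat.choose_zero_right, Nat.choose_one_right, Nat.choose_self,
      Nat.choose_succ_self_right] at h
    push_cast at h
    linarith
  -- reindexing
  have hrev : ∑ i ∈ Ico 2 (m + 2), ((m + 3).choose i : ℝ) * (p ^ (m + 3 - i) * q ^ i)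
      = ∑ i ∈ Ico 2 (m + 2), f i := by
    apply Finset.sum_nbij' (fun i => m + 3 - i) (fun i => m + 3 - i)
    · intro a ha; rw [Finset.mem_Ico] at *; omega
    · intro a ha; rw [Finset.mem_Ico] at *; omega
    · intro a ha; rw [Finset.mem_Ico] at ha; omega
    · intro a ha; rw [Finset.mem_Ico] at ha; omega
    · intro a ha
      rw [Finset.mem_Ico] at ha
      rw [hf]
      simp only
      rw [show m + 3 - (m + 3 - a) = a by omega, Nat.choose_symm (by omega : a ≤ m + 3)]
  -- AM-GM per term
  have hterm : ∀ i ∈ Ico 2 (m + 2),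
      ((m + 3).choose i : ℝ) * (2 * t)
        ≤ ((m + 3).choose i : ℝ) * (p ^ i * q ^ (m + 3 - i) + p ^ (m + 3 - i) * q ^ i) := by
    intro i hi
    rw [Finset.mem_Ico] at hi
    apply mul_le_mul_of_nonneg_left _ (by positivity)
    have e1 : p ^ i * p ^ (m + 3 - i) = p ^ (m + 3) := by
      rw [← pow_add]; congr 1; omega
    have e2 : q ^ (m + 3 - i) * q ^ i = q ^ (m + 3) := by
      rw [← pow_add]; congr 1; omega
    have hab : (p ^ i * q ^ (m + 3 - i)) * (p ^ (m + 3 - i) * q ^ i) = (p * q) ^ (m + 3) := by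
      rw [mul_pow, ← e1, ← e2]; ring
    have := amgm' (a := p ^ i * q ^ (m + 3 - i)) (b := p ^ (m + 3 - i) * q ^ i)
      (by positivity) (by positivity)
    rw [hab, ← ht'] at this
    linarith
  -- key inequality
  have hkey : (2 ^ (m + 3) - 2 * ((m : ℝ) + 3) - 2) * t ≤ ∑ i ∈ Ico 2 (m + 2), f i := by
    have h2S : (2 ^ (m + 3) - 2 * ((m : ℝ) + 3) - 2) * (2 * t)
        ≤ 2 * ∑ i ∈ Ico 2 (m + 2), f i := by
      calc (2 ^ (m + 3) - 2 * ((m : ℝ) + 3) - 2) * (2 * t)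
          = ∑ i ∈ Ico 2 (m + 2), ((m + 3).choose i : ℝ) * (2 * t) := by
            rw [← Finset.sum_mul, hC]
        _ ≤ ∑ i ∈ Ico 2 (m + 2), ((m + 3).choose i : ℝ)
              * (p ^ i * q ^ (m + 3 - i) + p ^ (m + 3 - i) * q ^ i) :=
            Finset.sum_le_sum hterm
        _ = (∑ i ∈ Ico 2 (m + 2), f i)
              + ∑ i ∈ Ico 2 (m + 2), ((m + 3).choose i : ℝ) * (p ^ (m + 3 - i) * q ^ i) := by
            rw [← Finset.sum_add_distrib]
            exact Finset.sum_congr rfl (fun i _ => by rw [hf]; ring)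
        _ = 2 * ∑ i ∈ Ico 2 (m + 2), f i := by rw [hrev]; ring
    linarith
  -- polynomial identity
  have hId : 1 - q ^ (m + 3) - p ^ (m + 3) - ((m : ℝ) + 3) * (p * q ^ (m + 2))
        - ((m : ℝ) + 3) * (p ^ (m + 2) * q)
      = ((m : ℝ) + 3) * (1 - p ^ (m + 2) - q ^ (m + 2))
        - (((m : ℝ) + 3) - 1) * (1 - p ^ (m + 3) - q ^ (m + 3)) := by
    linear_combination (-((m : ℝ) + 3) * (p ^ (m + 2) + q ^ (m + 2))) * hpq
  have P : (2 ^ (m + 3) - 2 * ((m : ℝ) + 3) - 2) * t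
        + (((m : ℝ) + 3) - 1) * (1 - p ^ (m + 3) - q ^ (m + 3))
      ≤ ((m : ℝ) + 3) * (1 - p ^ (m + 2) - q ^ (m + 2)) := by
    rw [hS, hId] at hkey
    linarith
  -- finish
  have hkm : m + 3 - 1 = m + 2 := by omega
  rw [hkm]
  push_cast
  set K : ℝ := (m : ℝ) + 3 with hK
  have hKpos : 0 < K := by rw [hK]; positivity
  have hK1pos : 0 < K - 1 := by rw [hK]; linarith [Nat.cast_nonneg (α := ℝ) m]
  have hDpos : 0 < K * (K - 1) := mul_pos hKpos hK1pos
  have hKne : K ≠ 0 := ne_of_gt hKpos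
  have hK1ne : K - 1 ≠ 0 := ne_of_gt hK1pos
  have h1 : (1 - p ^ (m + 3) - q ^ (m + 3)) / K
      = ((K - 1) * (1 - p ^ (m + 3) - q ^ (m + 3))) / (K * (K - 1)) := by
    field_simp
  have h2 : (1 - p ^ (m + 2) - q ^ (m + 2)) / (K - 1)
      = (K * (1 - p ^ (m + 2) - q ^ (m + 2))) / (K * (K - 1)) := by
    field_simp
  have h3 : (2 ^ (m + 3) - 2 * K - 2) / (K * (K - 1)) * t
      = ((2 ^ (m + 3) - 2 * K - 2) * t) / (K * (K - 1)) := by ring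
  rw [h1, h2, h3, ← sub_div, div_le_div_iff_of_pos_right hDpos]
  linarith
end

section
/- For every real p ∈ [0,1] with q = 1 - p and every integer k ≥ 2, one has 1 - p^k - q^k ≤ k·p·q - ((k-4)·2^{k-2} + 2)·(pq)^{k/2}. -/
open Finset

lemma strip_aux (f : ℕ → ℝ) (n : ℕ) :
    ∑ i ∈ range (n+1), f (i+1) = (∑ i ∈ range (n+3), f i) - f 0 - f (n+2) := by
  rw [Finset.sum_range_succ' f (n+2), Finset.sum_range_succ (fun i => f (i+1)) (n+1)]
  ring

lemma natid (m i : ℕ) (h : i ≤ m) :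
    (m+2)*(m+1)*(m.choose i) = (i+1)*((m+1)-i)*((m+2).choose (i+1)) := by
  have h1 := Nat.add_one_mul_choose_eq (m+1) i
  have h2 := Nat.add_one_mul_choose_eq m (m - i)
  have h3 : m.choose (m - i) = m.choose i := Nat.choose_symm h
  have h4 : (m+1).choose (m+1-i) = (m+1).choose i := Nat.choose_symm (le_trans h (Nat.le_succ m))
  have h5 : m - i + 1 = m + 1 - i := by omega
  rw [h3, h5, h4] at h2
  calc (m+2)*(m+1)*(m.choose i) = (m+2) * ((m+1) * m.choose i) := by ring
    _ = (m+2) * ((m+1).choose i * (m+1-i)) := by rw [h2]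
    _ = (m+1-i) * ((m+1+1) * (m+1).choose i) := by ring
    _ = (m+1-i) * ((m+2).choose (i+1) * (i+1)) := by rw [h1]
    _ = (i+1)*((m+1)-i)*((m+2).choose (i+1)) := by ring

theorem stmt_1 (p : ℝ) (hp0 : 0 ≤ p) (hp1 : p ≤ 1) (q : ℝ) (hq : q = 1 - p)
    (k : ℕ) (hk : 2 ≤ k) :
    1 - p ^ k - q ^ k ≤
      (k : ℝ) * p * q -
        (((k : ℝ) - 4) * (2 : ℝ) ^ (k - 2) + 2) * (p * q) ^ ((k : ℝ) / 2) := by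
  obtain ⟨m, rfl⟩ : ∃ m, k = m + 2 := ⟨k - 2, by omega⟩
  have hq0 : 0 ≤ q := by rw [hq]; linarith
  have hpq1 : p + q = 1 := by rw [hq]; ring
  have ht0 : 0 ≤ p * q := mul_nonneg hp0 hq0
  set c : ℕ → ℝ := fun i => ((m:ℝ)+2) * (m.choose i) - ((m+2).choose (i+1)) with hc_def
  set T : ℕ → ℝ := fun i => p^(i+1) * q^(m+1-i) with hT_def
  set R : ℝ := (p*q) ^ ((((m:ℕ)+2 : ℕ) : ℝ)/2) with hR_def
  have hRsqrt : R = Real.sqrt ((p*q)^(m+2)) := by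
    rw [Real.sqrt_eq_rpow, hR_def, ← Real.rpow_natCast (p*q) (m+2), ← Real.rpow_mul ht0]
    congr 1
    push_cast
    ring
  have hR0 : 0 ≤ R := by rw [hRsqrt]; exact Real.sqrt_nonneg _
  have hRR : R * R = (p*q)^(m+2) := by
    rw [hRsqrt]; exact Real.mul_self_sqrt (pow_nonneg ht0 _)
  -- coefficients nonneg
  have hc0 : ∀ i ∈ range (m+1), 0 ≤ c i := by
    intro i hi
    have him : i ≤ m := Nat.lt_succ_iff.mp (mem_range.mp hi)
    have hid := natid m i him
    have hidR : ((m:ℝ)+2)*((m:ℝ)+1)*(m.choose i) =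
        ((i:ℝ)+1)*(((m:ℝ)+1)-(i:ℝ))*((m+2).choose (i+1)) := by
      have : (((m+2)*(m+1)*(m.choose i) : ℕ) : ℝ)
          = (((i+1)*((m+1)-i)*((m+2).choose (i+1)) : ℕ) : ℝ) := by exact_mod_cast hid
      push_cast [Nat.cast_sub (by omega : i ≤ m+1)] at this
      linarith
    have hB : (0:ℝ) ≤ ((m+2).choose (i+1)) := Nat.cast_nonneg _
    have hx : (i:ℝ) ≤ (m:ℝ) := by exact_mod_cast him
    have h6 : ((m:ℝ)+1) * c i = (i:ℝ)*((m:ℝ)-(i:ℝ)) * ((m+2).choose (i+1)) := by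
      rw [hc_def]; simp only; linear_combination hidR
    have hprod : (0:ℝ) ≤ (i:ℝ)*((m:ℝ)-(i:ℝ)) * ((m+2).choose (i+1)) :=
      mul_nonneg (mul_nonneg (Nat.cast_nonneg _) (by linarith)) hB
    nlinarith [h6, hprod]
  -- symmetry
  have hcsym : ∀ i ∈ range (m+1), c (m - i) = c i := by
    intro i hi
    have him : i ≤ m := Nat.lt_succ_iff.mp (mem_range.mp hi)
    have e1 : m.choose (m-i) = m.choose i := Nat.choose_symm him
    have e2 : (m+2).choose (m-i+1) = (m+2).choose (i+1) := by
      rw [show m - i + 1 = (m+2) - (i+1) from by omega, Nat.choose_symm (by omega)]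
    simp only [hc_def, e1, e2]
  -- product of paired terms
  have hTprod : ∀ i ∈ range (m+1), T i * T (m-i) = R * R := by
    intro i hi
    have him : i ≤ m := Nat.lt_succ_iff.mp (mem_range.mp hi)
    rw [hRR, hT_def]
    simp only
    rw [show m+1-(m-i) = i+1 from by omega]
    rw [mul_mul_mul_comm, ← pow_add, ← pow_add, show i+1+(m-i+1) = m+2 from by omega,
        show m+1-i+(i+1) = m+2 from by omega, ← mul_pow]
  -- AM-GM per pair
  have hAM : ∀ i ∈ range (m+1), 2*R ≤ T i + T (m-i) := by
    intro i hi
    have h1 : 0 ≤ T i := by rw [hT_def]; positivity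
    have h2 : 0 ≤ T (m-i) := by rw [hT_def]; positivity
    have h3 := hTprod i hi
    nlinarith [sq_nonneg (T i - T (m-i)), h3, h1, h2, hR0]
  -- key identity
  have sum1 : ∑ i ∈ range (m+1), (((m:ℝ)+2) * (m.choose i)) * T i = ((m:ℝ)+2) * p * q := by
    calc ∑ i ∈ range (m+1), (((m:ℝ)+2) * (m.choose i)) * T i
        = (((m:ℝ)+2) * (p*q)) * ∑ i ∈ range (m+1), p^i*q^(m-i)*(m.choose i) := by
          rw [Finset.mul_sum]; apply sum_congr rfl; intro i hi
          have him : i ≤ m := Nat.lt_succ_iff.mp (mem_range.mp hi)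
          rw [hT_def]; simp only
          rw [show m+1-i = (m-i)+1 from by omega]
          ring
      _ = ((m:ℝ)+2)*p*q := by rw [← add_pow, hpq1, one_pow]; ring
  have sum2 : ∑ i ∈ range (m+1), (((m+2).choose (i+1)):ℝ) * T i
      = 1 - p^(m+2) - q^(m+2) := by
    have hstrip := strip_aux (fun j => p^j * q^(m+2-j) * ((m+2).choose j)) m
    have hL : ∑ i ∈ range (m+1), (((m+2).choose (i+1)):ℝ) * T i
        = ∑ i ∈ range (m+1), (fun j => p^j * q^(m+2-j) * (((m+2).choose j : ℕ):ℝ)) (i+1) := by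
      apply sum_congr rfl; intro i hi
      simp only [hT_def]
      rw [show m+2-(i+1) = m+1-i from by omega]
      ring
    rw [hL, hstrip, ← add_pow, hpq1, one_pow]
    simp
    ring
  have key1 : ∑ i ∈ range (m+1), c i * T i
      = ((m:ℝ)+2)*p*q - (1 - p^(m+2) - q^(m+2)) := by
    have e : ∀ i ∈ range (m+1), c i * T i
        = (((m:ℝ)+2)*(m.choose i))*T i - (((m+2).choose (i+1)):ℝ)*T i := by
      intro i _; rw [hc_def]; ring
    rw [sum_congr rfl e, Finset.sum_sub_distrib, sum1, sum2]
  -- sum of coefficients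
  have sumc : ∑ i ∈ range (m+1), c i = ((m:ℝ)+2-4) * 2^m + 2 := by
    simp only [hc_def]
    rw [Finset.sum_sub_distrib, ← Finset.mul_sum]
    have hA : ∑ i ∈ range (m+1), ((m.choose i : ℕ) : ℝ) = 2^m := by
      exact_mod_cast Nat.sum_range_choose m
    have hB : ∑ i ∈ range (m+1), (((m+2).choose (i+1) : ℕ) : ℝ) = 2^(m+2) - 2 := by
      rw [strip_aux (fun j => (((m+2).choose j : ℕ):ℝ)) m]
      have : ∑ i ∈ range (m+3), (((m+2).choose i:ℕ):ℝ) = 2^(m+2) := by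
        exact_mod_cast Nat.sum_range_choose (m+2)
      rw [this]; simp; ring
    rw [hA, hB]; ring
  -- reflection
  have hrefl : ∑ i ∈ range (m+1), c i * T (m - i) = ∑ i ∈ range (m+1), c i * T i := by
    have hr := Finset.sum_range_reflect (fun i => c i * T i) (m+1)
    simp only [Nat.add_sub_cancel] at hr
    rw [← hr]
    exact sum_congr rfl (fun i hi => by rw [hcsym i hi])
  -- main estimate
  have main : (∑ i ∈ range (m+1), c i) * R ≤ ∑ i ∈ range (m+1), c i * T i := by
    rw [Finset.sum_mul]
    calc ∑ i ∈ range (m+1), c i * R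
        ≤ ∑ i ∈ range (m+1), c i * ((T i + T (m-i))/2) := by
          apply sum_le_sum; intro i hi
          apply mul_le_mul_of_nonneg_left _ (hc0 i hi)
          have := hAM i hi; linarith
      _ = ((∑ i ∈ range (m+1), c i * T i) + ∑ i ∈ range (m+1), c i * T (m-i))/2 := by
          rw [← Finset.sum_add_distrib, Finset.sum_div]
          exact sum_congr rfl fun i _ => by ring
      _ = ∑ i ∈ range (m+1), c i * T i := by rw [hrefl]; ring
  have hgoal2 : (2:ℝ) ^ (m + 2 - 2) = 2 ^ m := by norm_num
  rw [hgoal2]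
  push_cast
  rw [sumc] at main
  rw [key1] at main
  linarith
end

section
/- Let X₁,...,Xₙ be mutually independent Bernoulli random variables with P[Xᵢ = 1] = pᵢ, let X = ∑ᵢ Xᵢ and p = (1/n)∑ᵢ pᵢ. If p ∈ (0,1) and 0 < ε ≤ 3p/10, then P[X ≤ (p - ε)n] ≤ exp(-nε²/(2p(1-p)) + nε³/(2p²(1-p)²)). -/
/-!
Chernoff's method with the optimal parameter. By independence the moment generating function of
`X` factorises into Bernoulli factors `1 + (eᵗ - 1) pᵢ`, and AM-GM bounds their product by
`(1 + (eᵗ - 1) p)ⁿ`; optimising over `t ≤ 0` gives `P[X ≤ (p - ε) n] ≤ exp (-n D(p - ε ‖ p))`,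
where `D` is the relative entropy of two Bernoulli laws. Writing
`D(p - ε ‖ p) = p φ(-ε/p) + (1 - p) φ(ε/(1 - p))` with `φ(x) = (1 + x) log (1 + x)`, the Taylor
bound `φ(x) ≥ x + x²/2 - x³/6`, valid for all `x > -1`, yields the stated lower bound on `D`.
-/

open Real MeasureTheory ProbabilityTheory

noncomputable def binaryKL (a p : ℝ) : ℝ :=
  a * log (a / p) + (1 - a) * log ((1 - a) / (1 - p))

section

open Set

lemma monotoneOn_log_one_add_sub_quadratic :
    MonotoneOn (fun x : ℝ => log (1 + x) - (x - x ^ 2 / 2)) (Ioi (-1)) := by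
  have hderiv : ∀ x ∈ Ioi (-1 : ℝ), HasDerivAt (fun x : ℝ => log (1 + x) - (x - x ^ 2 / 2))
      (x ^ 2 / (1 + x)) x := by
    intro x hx
    have h1 : 1 + x ≠ 0 := by rw [mem_Ioi] at hx; linarith
    refine ((((hasDerivAt_id x).const_add 1).log h1).sub
      ((hasDerivAt_id x).sub ((hasDerivAt_pow 2 x).div_const 2))).congr_deriv ?_
    simp only [id]
    field_simp
    ring
  refine monotoneOn_of_hasDerivWithinAt_nonneg (convex_Ioi _)
    (fun x hx => (hderiv x hx).continuousAt.continuousWithinAt)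
    (fun x hx => (hderiv x (interior_subset hx)).hasDerivWithinAt) fun x hx => ?_
  rw [interior_Ioi, mem_Ioi] at hx
  have : 0 < 1 + x := by linarith
  positivity

lemma add_sq_div_two_sub_cube_div_six_le_one_add_mul_log {x : ℝ} (hx : -1 < x) :
    x + x ^ 2 / 2 - x ^ 3 / 6 ≤ (1 + x) * log (1 + x) := by
  set f : ℝ → ℝ := fun x => (1 + x) * log (1 + x) - (x + x ^ 2 / 2 - x ^ 3 / 6) with hf
  set g : ℝ → ℝ := fun x => log (1 + x) - (x - x ^ 2 / 2) with hg
  have hderiv : ∀ y ∈ Ioi (-1 : ℝ), HasDerivAt f (g y) y := by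
    intro y hy
    have h1 : 1 + y ≠ 0 := by rw [mem_Ioi] at hy; linarith
    have h1' : HasDerivAt (fun x : ℝ => 1 + x) 1 y := (hasDerivAt_id y).const_add 1
    refine ((h1'.mul (h1'.log h1)).sub (((hasDerivAt_id y).add
      ((hasDerivAt_pow 2 y).div_const 2)).sub ((hasDerivAt_pow 3 y).div_const 6))).congr_deriv ?_
    field_simp
    ring
  have hg0 : g 0 = 0 := by simp [hg]
  have hmem : ∀ {a b : ℝ}, -1 < a → ∀ y ∈ Icc a b, y ∈ Ioi (-1) := fun ha y hy =>
    lt_of_lt_of_le ha hy.1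
  have hcont : ∀ {a b : ℝ}, -1 < a → ContinuousOn f (Icc a b) := fun ha y hy =>
    (hderiv y (hmem ha y hy)).continuousAt.continuousWithinAt
  have hderiv' : ∀ {a b : ℝ}, -1 < a →
      ∀ y ∈ interior (Icc a b), HasDerivWithinAt f (g y) (interior (Icc a b)) y :=
    fun ha y hy => (hderiv y (hmem ha y (interior_subset hy))).hasDerivWithinAt
  -- `f' = g` has the sign of its argument, so `f` is minimal at `0`
  suffices f 0 ≤ f x by simpa [hf] using this
  rcases le_total 0 x with hx0 | hx0
  · refine monotoneOn_of_hasDerivWithinAt_nonneg (convex_Icc 0 x) (hcont (by norm_num))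
      (hderiv' (by norm_num)) (fun y hy => ?_) (left_mem_Icc.2 hx0) (right_mem_Icc.2 hx0) hx0
    rw [interior_Icc] at hy
    rw [← hg0]
    exact monotoneOn_log_one_add_sub_quadratic (by norm_num) (hmem (by norm_num) y
      (Ioo_subset_Icc_self hy)) hy.1.le
  · refine antitoneOn_of_hasDerivWithinAt_nonpos (convex_Icc x 0) (hcont hx)
      (hderiv' hx) (fun y hy => ?_) (left_mem_Icc.2 hx0) (right_mem_Icc.2 hx0) hx0
    rw [interior_Icc] at hy
    rw [← hg0]
    exact monotoneOn_log_one_add_sub_quadratic (hmem hx y (Ioo_subset_Icc_self hy))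
      (by norm_num) hy.2.le

end

lemma sq_div_sub_cube_div_le_binaryKL_sub {p ε : ℝ} (hp0 : 0 < p) (hp1 : p < 1) (hε0 : 0 ≤ ε)
    (hεp : ε < p) :
    ε ^ 2 / (2 * p * (1 - p)) - ε ^ 3 / (2 * p ^ 2 * (1 - p) ^ 2) ≤ binaryKL (p - ε) p := by
  have hq0 : 0 < 1 - p := by linarith
  set a := ε / p with ha
  set b := ε / (1 - p) with hb
  have hKL : binaryKL (p - ε) p =
      p * ((1 + -a) * log (1 + -a)) + (1 - p) * ((1 + b) * log (1 + b)) := by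
    have h1 : p - ε = p * (1 + -a) := by rw [ha]; field_simp; ring
    have h2 : 1 - (p - ε) = (1 - p) * (1 + b) := by rw [hb]; field_simp; ring
    rw [binaryKL, h2, h1, mul_div_cancel_left₀ _ hp0.ne', mul_div_cancel_left₀ _ hq0.ne']
    ring
  have ha1 : a < 1 := (div_lt_one hp0).2 hεp
  have hb0 : 0 ≤ b := by positivity
  have hA := add_sq_div_two_sub_cube_div_six_le_one_add_mul_log (neg_lt_neg ha1)
  have hB := add_sq_div_two_sub_cube_div_six_le_one_add_mul_log (by linarith : -1 < b)
  rw [hKL]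
  calc ε ^ 2 / (2 * p * (1 - p)) - ε ^ 3 / (2 * p ^ 2 * (1 - p) ^ 2)
      ≤ p * (-a + (-a) ^ 2 / 2 - (-a) ^ 3 / 6) + (1 - p) * (b + b ^ 2 / 2 - b ^ 3 / 6) := by
        rw [← sub_nonneg]
        have : p * (-a + (-a) ^ 2 / 2 - (-a) ^ 3 / 6) + (1 - p) * (b + b ^ 2 / 2 - b ^ 3 / 6) -
            (ε ^ 2 / (2 * p * (1 - p)) - ε ^ 3 / (2 * p ^ 2 * (1 - p) ^ 2)) =
            ε ^ 3 * ((1 - p) ^ 2 - p ^ 2 + 3) / (6 * p ^ 2 * (1 - p) ^ 2) := by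
          rw [ha, hb]
          field_simp
          ring
        rw [this]
        have : 0 ≤ (1 - p) ^ 2 - p ^ 2 + 3 := by nlinarith
        positivity
    _ ≤ p * ((1 + -a) * log (1 + -a)) + (1 - p) * ((1 + b) * log (1 + b)) := by gcongr

lemma exp_neg_mul_mul_one_add_eq_exp_neg_binaryKL {a p t : ℝ} (ha0 : 0 < a) (ha1 : a < 1)
    (hp0 : 0 < p) (hp1 : p < 1) (ht : exp t = a * (1 - p) / (p * (1 - a))) :
    exp (-t * a) * (1 + (exp t - 1) * p) = exp (-binaryKL a p) := by
  have ha1' : 0 < 1 - a := by linarith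
  have hp1' : 0 < 1 - p := by linarith
  have hmix : 1 + (exp t - 1) * p = exp (log (1 - p) - log (1 - a)) := by
    rw [exp_sub, exp_log hp1', exp_log ha1', ht]
    field_simp
    ring
  have hlog : t = log a + log (1 - p) - log p - log (1 - a) := by
    rw [← log_exp t, ht, log_div (by positivity) (by positivity), log_mul ha0.ne' hp1'.ne',
      log_mul hp0.ne' ha1'.ne']
    ring
  rw [hmix, ← exp_add, binaryKL, log_div ha0.ne' hp0.ne', log_div ha1'.ne' hp1'.ne', hlog]
  ring_nf

open Finset

lemma Real.prod_le_arith_mean_pow {ι : Type*} (s : Finset ι) (z : ι → ℝ)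
    (hz : ∀ i ∈ s, 0 ≤ z i) : ∏ i ∈ s, z i ≤ ((∑ i ∈ s, z i) / #s) ^ #s := by
  rcases s.eq_empty_or_nonempty with rfl | hs
  · simp
  have hcard : (0 : ℝ) < #s := by exact_mod_cast hs.card_pos
  have hamgm := Real.geom_mean_le_arith_mean_weighted s (fun _ => (#s : ℝ)⁻¹) z
    (fun _ _ => by positivity) (by simp [hcard.ne']) hz
  rw [Real.finsetProd_rpow s z hz, ← Finset.mul_sum, ← div_eq_inv_mul] at hamgm
  calc ∏ i ∈ s, z i = ((∏ i ∈ s, z i) ^ ((#s : ℝ)⁻¹)) ^ #s :=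
        (Real.rpow_inv_natCast_pow (prod_nonneg hz) hs.card_pos.ne').symm
    _ ≤ ((∑ i ∈ s, z i) / #s) ^ #s := pow_le_pow_left₀ (rpow_nonneg (prod_nonneg hz) _) hamgm _

namespace ProbabilityTheory

variable {Ω ι : Type*} [MeasurableSpace Ω] {μ : Measure Ω} [IsProbabilityMeasure μ]

lemma mgf_eq_of_forall_eq_zero_or_eq_one {X : Ω → ℝ} (hX : Measurable X)
    (h01 : ∀ ω, X ω = 0 ∨ X ω = 1) (t : ℝ) :
    mgf X μ t = 1 + (exp t - 1) * μ.real {ω | X ω = 1} := by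
  have hs : MeasurableSet {ω | X ω = 1} := hX (measurableSet_singleton 1)
  have hexp : (fun ω => exp (t * X ω)) =
      fun ω => 1 + (exp t - 1) * {ω | X ω = 1}.indicator 1 ω := by
    funext ω
    rcases h01 ω with h | h <;> simp [h]
  rw [mgf, hexp, integral_add (integrable_const 1)
    (((integrable_const 1).indicator hs).const_mul _), integral_const_mul,
    integral_indicator_one hs]
  simp

variable [Fintype ι] [Nonempty ι] {X : ι → Ω → ℝ}

lemma iIndepFun.mgf_sum_le_of_forall_eq_zero_or_eq_one (hind : iIndepFun X μ)
    (hmeas : ∀ i, Measurable (X i)) (h01 : ∀ i ω, X i ω = 0 ∨ X i ω = 1) {t p : ℝ} (ht : t ≤ 0)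
    (hp : p * Fintype.card ι ≤ ∑ i, μ.real {ω | X i ω = 1}) :
    mgf (∑ i, X i) μ t ≤ (1 + (exp t - 1) * p) ^ Fintype.card ι := by
  have hc : exp t - 1 ≤ 0 := by linarith [exp_le_one_iff.2 ht]
  have hfactor : ∀ i, 0 ≤ 1 + (exp t - 1) * μ.real {ω | X i ω = 1} := fun i => by
    nlinarith [exp_pos t, measureReal_le_one (μ := μ) (s := {ω | X i ω = 1})]
  have hcard : (0 : ℝ) < Fintype.card ι := by exact_mod_cast Fintype.card_pos
  have hmean : (∑ i, (1 + (exp t - 1) * μ.real {ω | X i ω = 1})) / Fintype.card ι ≤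
      1 + (exp t - 1) * p := by
    rw [div_le_iff₀ hcard, sum_add_distrib, ← mul_sum]
    simp only [sum_const, card_univ, nsmul_eq_mul, mul_one]
    nlinarith
  rw [hind.mgf_sum hmeas]
  simp_rw [mgf_eq_of_forall_eq_zero_or_eq_one (hmeas _) (h01 _)]
  exact (Real.prod_le_arith_mean_pow _ _ fun i _ => hfactor i).trans
    (pow_le_pow_left₀ (div_nonneg (sum_nonneg fun i _ => hfactor i) hcard.le) hmean _)

theorem iIndepFun.measureReal_sum_le_le_exp_neg_binaryKL (hind : iIndepFun X μ)
    (hmeas : ∀ i, Measurable (X i)) (h01 : ∀ i ω, X i ω = 0 ∨ X i ω = 1) {a p : ℝ}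
    (ha0 : 0 < a) (hap : a ≤ p) (hp1 : p < 1)
    (hp : p * Fintype.card ι ≤ ∑ i, μ.real {ω | X i ω = 1}) :
    μ.real {ω | ∑ i, X i ω ≤ a * Fintype.card ι} ≤
      exp (-(Fintype.card ι * binaryKL a p)) := by
  have hp0 : 0 < p := ha0.trans_le hap
  have ha1 : 0 < 1 - a := by linarith
  have hp1' : 0 < 1 - p := by linarith
  -- the minimiser of `exp (-t * a) * (1 + (exp t - 1) * p)`
  set t := log (a * (1 - p) / (p * (1 - a)))
  have hexp : exp t = a * (1 - p) / (p * (1 - a)) := exp_log (by positivity)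
  have ht : t ≤ 0 := by
    refine log_nonpos (by positivity) ((div_le_one (by positivity)).2 ?_)
    nlinarith
  have hint : Integrable (fun ω => exp (t * (∑ i, X i) ω)) μ := by
    refine Integrable.of_bound (by fun_prop) 1 (ae_of_all _ fun ω => ?_)
    have : 0 ≤ (∑ i, X i) ω := by
      rw [Finset.sum_apply]
      exact sum_nonneg fun i _ => by rcases h01 i ω with h | h <;> simp [h]
    rw [norm_of_nonneg (exp_pos _).le, exp_le_one_iff]
    exact mul_nonpos_of_nonpos_of_nonneg ht this
  calc μ.real {ω | ∑ i, X i ω ≤ a * Fintype.card ι}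
      ≤ exp (-t * (a * Fintype.card ι)) * mgf (∑ i, X i) μ t := by
        simpa only [Finset.sum_apply] using measure_le_le_exp_mul_mgf _ ht hint
    _ ≤ exp (-t * (a * Fintype.card ι)) * (1 + (exp t - 1) * p) ^ Fintype.card ι := by
        gcongr
        exact hind.mgf_sum_le_of_forall_eq_zero_or_eq_one hmeas h01 ht hp
    _ = (exp (-t * a) * (1 + (exp t - 1) * p)) ^ Fintype.card ι := by
        rw [mul_pow, ← exp_nat_mul]
        ring_nf
    _ = exp (-(Fintype.card ι * binaryKL a p)) := by
        rw [exp_neg_mul_mul_one_add_eq_exp_neg_binaryKL ha0 (by linarith) hp0 hp1 hexp,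
          ← exp_nat_mul]
        ring_nf

end ProbabilityTheory

theorem stmt_15 {Ω : Type*} [MeasurableSpace Ω] (μ : Measure Ω)
    [IsProbabilityMeasure μ] (n : ℕ) (hn : 0 < n) (X : Fin n → Ω → ℝ)
    (hmeas : ∀ i, Measurable (X i))
    (hind : iIndepFun X μ)
    (hval : ∀ i ω, X i ω = 0 ∨ X i ω = 1)
    (p : Fin n → ℝ) (hp : ∀ i, μ {ω | X i ω = 1} = ENNReal.ofReal (p i))
    (pbar : ℝ) (hpbar : pbar = (∑ i, p i) / n)
    (hpbar0 : 0 < pbar) (hpbar1 : pbar < 1)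
    (ε : ℝ) (hε0 : 0 < ε) (hε1 : ε ≤ 3 * pbar / 10) :
    (μ {ω | ∑ i, X i ω ≤ (pbar - ε) * n}).toReal ≤
      Real.exp (-(n * ε ^ 2) / (2 * pbar * (1 - pbar)) +
        n * ε ^ 3 / (2 * pbar ^ 2 * (1 - pbar) ^ 2)) := by
  have : Nonempty (Fin n) := Fin.pos_iff_nonempty.1 hn
  have hmean : pbar * Fintype.card (Fin n) ≤ ∑ i, μ.real {ω | X i ω = 1} := by
    rw [Fintype.card_fin, hpbar, div_mul_cancel₀ _ (by positivity)]
    gcongr with i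
    rw [measureReal_def, hp, ENNReal.toReal_ofReal']
    exact le_max_left _ _
  have hchernoff := hind.measureReal_sum_le_le_exp_neg_binaryKL hmeas hval
    (sub_pos.2 (by linarith)) (sub_le_self _ hε0.le) hpbar1 hmean
  have hKL := sq_div_sub_cube_div_le_binaryKL_sub hpbar0 hpbar1 hε0.le (by linarith)
  rw [Fintype.card_fin] at hchernoff
  refine hchernoff.trans (exp_le_exp.2 ?_)
  calc -(n * binaryKL (pbar - ε) pbar)
      ≤ -(n * (ε ^ 2 / (2 * pbar * (1 - pbar)) - ε ^ 3 / (2 * pbar ^ 2 * (1 - pbar) ^ 2))) := by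
        gcongr
    _ = _ := by ring
end

section
/- Let b, d > 0 be reals and H a finite simple graph with |V(H)| ≥ b + 2. For distinct vertices u, v, let r_H(u,v) := |(N_H(u) △ N_H(v)) \ {u,v}|, and the twin-width tww(H) is the least integer t such that H admits a t-contraction sequence. If H has fewer than b unordered pairs {u,v} of distinct vertices with r_H(u,v) < b + d, then tww(H) > d. -/
open scoped symmDiff

variable {V : Type*} [Fintype V] [DecidableEq V]

/-- There is a "red edge" between two disjoint parts `A` and `B` in `G` if
some pair across them is an edge and some pair across them is a non-edge. -/
def RedBetween (G : SimpleGraph V) (A B : Finset V) : Prop :=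
  (∃ a ∈ A, ∃ b ∈ B, G.Adj a b) ∧ (∃ a ∈ A, ∃ b ∈ B, a ≠ b ∧ ¬ G.Adj a b)

/-- The red degree of a part `A` in a partition `P` of the vertex set. -/
noncomputable def redDegree (G : SimpleGraph V) (P : Finset (Finset V))
    (A : Finset V) : ℕ :=
  {B ∈ (P : Set (Finset V)) | B ≠ A ∧ RedBetween G A B}.ncard

/-- `P 0, P 1, …, P (Fintype.card V - 1)` is a contraction sequence of `G`:
it starts with the partition of `V` into singletons and at each step two parts
are merged, ending with the one-part partition. -/
def IsContractionSeq (G : SimpleGraph V) (P : ℕ → Finset (Finset V)) : Prop :=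
  P 0 = Finset.univ.image (fun v : V => {v}) ∧
  ∀ i < Fintype.card V - 1, ∃ A ∈ P i, ∃ B ∈ P i, A ≠ B ∧
    P (i + 1) = insert (A ∪ B) (((P i).erase A).erase B)

/-- A `t`-contraction sequence: every part of every partition in the sequence
has red degree at most `t`. -/
def IsContractionSeqBounded (G : SimpleGraph V) (P : ℕ → Finset (Finset V))
    (t : ℕ) : Prop :=
  IsContractionSeq G P ∧
  ∀ i ≤ Fintype.card V - 1, ∀ A ∈ P i, redDegree G (P i) A ≤ t

/-- The twin-width of `G`: the least `t` admitting a `t`-contraction sequence. -/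
noncomputable def twinWidth (G : SimpleGraph V) : ℕ :=
  sInf {t : ℕ | ∃ P, IsContractionSeqBounded G P t}

/-- The red degree of the vertex obtained by contracting `u` and `v`:
`|(N(u) △ N(v)) \ {u, v}|`. -/
def contractionRedDeg (G : SimpleGraph V) [DecidableRel G.Adj] (u v : V) : ℕ :=
  ((G.neighborFinset u ∆ G.neighborFinset v) \ {u, v}).card

lemma seq_invariant (G : SimpleGraph V) (P : ℕ → Finset (Finset V))
    (hP : IsContractionSeq G P) :
    ∀ i, i ≤ Fintype.card V - 1 →
      ((P i).card + i = Fintype.card V ∧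
      (∀ A ∈ P i, A.Nonempty) ∧
      ((P i : Set (Finset V)).PairwiseDisjoint id) ∧
      (∀ v : V, ∃ A ∈ P i, v ∈ A) ∧
      (∑ A ∈ P i, A.card = Fintype.card V)) := by
  intro i
  induction i with
  | zero =>
    intro _
    rw [hP.1]
    refine ⟨?_, ?_, ?_, ?_, ?_⟩
    · rw [Finset.card_image_of_injective _ Finset.singleton_injective]
      simp
    · rintro A hA
      obtain ⟨v, _, rfl⟩ := Finset.mem_image.mp hA
      exact ⟨v, Finset.mem_singleton_self v⟩
    · rintro X hX Y hY hXY
      rw [Finset.mem_coe, Finset.mem_image] at hX hY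
      obtain ⟨a, _, rfl⟩ := hX
      obtain ⟨c, _, rfl⟩ := hY
      exact Finset.disjoint_singleton.mpr (fun h => hXY (by rw [h]))
    · intro v
      exact ⟨{v}, Finset.mem_image_of_mem _ (Finset.mem_univ v), Finset.mem_singleton_self v⟩
    · rw [Finset.sum_image (fun a _ b _ h => Finset.singleton_injective h)]
      simp
  | succ i ih =>
    intro hi1
    obtain ⟨hcard, hne1, hdisj, hcov, hsum⟩ := ih (by omega)
    obtain ⟨A, hA, B, hB, hne, hstep⟩ := hP.2 i (by omega)
    have hBe : B ∈ (P i).erase A := Finset.mem_erase.mpr ⟨Ne.symm hne, hB⟩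
    have h2le : 2 ≤ (P i).card := Finset.one_lt_card.mpr ⟨A, hA, B, hB, hne⟩
    have hCnot : A ∪ B ∉ ((P i).erase A).erase B := by
      intro h
      have h1 := Finset.mem_erase.mp h
      have h2 := Finset.mem_erase.mp h1.2
      have hd : Disjoint (id (A ∪ B)) (id A) :=
        hdisj (Finset.mem_coe.mpr h2.2) (Finset.mem_coe.mpr hA) h2.1
      obtain ⟨a, ha⟩ := hne1 A hA
      exact Finset.disjoint_left.mp hd (Finset.mem_union_left _ ha) ha
    have hEsub : ((P i).erase A).erase B ⊆ P i :=
      (Finset.erase_subset _ _).trans (Finset.erase_subset _ _)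
    refine ⟨?_, ?_, ?_, ?_, ?_⟩
    · rw [hstep, Finset.card_insert_of_notMem hCnot,
        Finset.card_erase_of_mem hBe, Finset.card_erase_of_mem hA]
      omega
    · rw [hstep]
      intro X hX
      rcases Finset.mem_insert.mp hX with rfl | hX
      · obtain ⟨a, ha⟩ := hne1 A hA
        exact ⟨a, Finset.mem_union_left _ ha⟩
      · exact hne1 X (hEsub hX)
    · rw [hstep]
      intro X hX Y hY hXY
      simp only [Finset.coe_insert, Set.mem_insert_iff, Finset.mem_coe] at hX hY
      have key : ∀ Z ∈ ((P i).erase A).erase B, Disjoint (A ∪ B) Z := by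
        intro Z hZ
        have h1 := Finset.mem_erase.mp hZ
        have h2 := Finset.mem_erase.mp h1.2
        rw [Finset.disjoint_union_left]
        exact ⟨hdisj (Finset.mem_coe.mpr hA) (Finset.mem_coe.mpr h2.2) (Ne.symm h2.1),
          hdisj (Finset.mem_coe.mpr hB) (Finset.mem_coe.mpr h2.2) (Ne.symm h1.1)⟩
      rcases hX with rfl | hX
      · rcases hY with rfl | hY
        · exact absurd rfl hXY
        · exact key Y hY
      · rcases hY with rfl | hY
        · exact (key X hX).symm
        · exact hdisj (Finset.mem_coe.mpr (hEsub hX)) (Finset.mem_coe.mpr (hEsub hY)) hXY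
    · intro v
      obtain ⟨W, hW, hvW⟩ := hcov v
      rw [hstep]
      by_cases h1 : W = A
      · exact ⟨A ∪ B, Finset.mem_insert_self _ _, Finset.mem_union_left _ (h1 ▸ hvW)⟩
      by_cases h2 : W = B
      · exact ⟨A ∪ B, Finset.mem_insert_self _ _, Finset.mem_union_right _ (h2 ▸ hvW)⟩
      · exact ⟨W, Finset.mem_insert_of_mem (Finset.mem_erase.mpr ⟨h2,
          Finset.mem_erase.mpr ⟨h1, hW⟩⟩), hvW⟩
    · rw [hstep, Finset.sum_insert hCnot]
      have hd : Disjoint A B := hdisj (Finset.mem_coe.mpr hA) (Finset.mem_coe.mpr hB) hne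
      have e1 : ∑ W ∈ (P i).erase A, W.card + A.card = ∑ W ∈ P i, W.card :=
        Finset.sum_erase_add _ _ hA
      have e2 : ∑ W ∈ ((P i).erase A).erase B, W.card + B.card
          = ∑ W ∈ (P i).erase A, W.card := Finset.sum_erase_add _ _ hBe
      rw [Finset.card_union_of_disjoint hd]
      omega

lemma seq_mono (G : SimpleGraph V) (P : ℕ → Finset (Finset V))
    (hP : IsContractionSeq G P) (i : ℕ) :
    ∀ j, i ≤ j → j ≤ Fintype.card V - 1 → ∀ W ∈ P i, ∃ W' ∈ P j, W ⊆ W' := by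
  intro j hij
  induction j, hij using Nat.le_induction with
  | base => exact fun _ W hW => ⟨W, hW, subset_rfl⟩
  | succ j hij ih =>
    intro hj1 W hW
    obtain ⟨W', hW', hsub⟩ := ih (by omega) W hW
    obtain ⟨A, hA, B, hB, hne, hstep⟩ := hP.2 j (by omega)
    rw [hstep]
    by_cases h1 : W' = A
    · exact ⟨A ∪ B, Finset.mem_insert_self _ _,
        hsub.trans (h1 ▸ Finset.subset_union_left)⟩
    by_cases h2 : W' = B
    · exact ⟨A ∪ B, Finset.mem_insert_self _ _,
        hsub.trans (h2 ▸ Finset.subset_union_right)⟩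
    · exact ⟨W', Finset.mem_insert_of_mem (Finset.mem_erase.mpr ⟨h2,
        Finset.mem_erase.mpr ⟨h1, hW'⟩⟩), hsub⟩

lemma step_bound (G : SimpleGraph V) [DecidableRel G.Adj] (P : ℕ → Finset (Finset V))
    (t : ℕ) (hP : IsContractionSeqBounded G P t) {i : ℕ} (hi : i < Fintype.card V - 1)
    {A B : Finset V} (hA : A ∈ P i) (hB : B ∈ P i) (hne : A ≠ B)
    (hstep : P (i + 1) = insert (A ∪ B) (((P i).erase A).erase B))
    {u v : V} (hu : u ∈ A) (hv : v ∈ B) :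
    contractionRedDeg G u v ≤ t + i := by
  classical
  obtain ⟨hcard_i, hne_i, hdisj_i, hcov_i, hsum_i⟩ := seq_invariant G P hP.1 i (by omega)
  obtain ⟨hcard, hne1, hdisj, hcov, hsum⟩ := seq_invariant G P hP.1 (i+1) (by omega)
  set C := A ∪ B with hC
  have hCmem : C ∈ P (i+1) := by rw [hstep]; exact Finset.mem_insert_self _ _
  have huv : u ≠ v := by
    intro h
    have hd : Disjoint A B := hdisj_i (Finset.mem_coe.mpr hA) (Finset.mem_coe.mpr hB) hne
    exact (Finset.disjoint_left.mp hd hu) (h ▸ hv)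
  have huC : u ∈ C := Finset.mem_union_left _ hu
  have hvC : v ∈ C := Finset.mem_union_right _ hv
  set S := (G.neighborFinset u ∆ G.neighborFinset v) \ {u, v} with hSdef
  set R := (P (i+1)).filter (fun W => W ≠ C ∧ RedBetween G C W) with hRdef
  have hRdeg : R.card ≤ t := by
    have hcoe : (R : Set (Finset V))
        = {W ∈ ((P (i+1)) : Set (Finset V)) | W ≠ C ∧ RedBetween G C W} := by
      ext W
      simp only [hRdef, Finset.coe_filter, Set.mem_setOf_eq, Finset.mem_coe]
    have h2 : R.card = redDegree G (P (i+1)) C := by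
      rw [← Set.ncard_coe_finset, hcoe]; rfl
    rw [h2]
    exact hP.2 (i+1) (by omega) C hCmem
  have hSsplit : S.card = ∑ W ∈ P (i+1), (S ∩ W).card := by
    have hU : S = (P (i+1)).biUnion (fun W => S ∩ W) := by
      ext x
      simp only [Finset.mem_biUnion, Finset.mem_inter]
      constructor
      · intro hx; obtain ⟨W, hW, hxW⟩ := hcov x; exact ⟨W, hW, hx, hxW⟩
      · rintro ⟨W, _, hx, _⟩; exact hx
    conv_lhs => rw [hU]
    exact Finset.card_biUnion (fun X hX Y hY hXY =>
      Finset.disjoint_of_subset_left Finset.inter_subset_right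
        (Finset.disjoint_of_subset_right Finset.inter_subset_right
          (hdisj (Finset.mem_coe.mpr hX) (Finset.mem_coe.mpr hY) hXY)))
  have hCin : ∀ W ∈ (P (i+1)).erase C, (S ∩ W).Nonempty → W ∈ R := by
    rintro W hWe ⟨x, hx⟩
    obtain ⟨hWC, hW⟩ := Finset.mem_erase.mp hWe
    refine Finset.mem_filter.mpr ⟨hW, hWC, ?_⟩
    obtain ⟨hxS, hxW⟩ := Finset.mem_inter.mp hx
    obtain ⟨hsym, hnot⟩ := Finset.mem_sdiff.mp hxS
    simp only [Finset.mem_insert, Finset.mem_singleton, not_or] at hnot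
    rw [Finset.mem_symmDiff] at hsym
    rcases hsym with ⟨h1, h2⟩ | ⟨h1, h2⟩
    · rw [SimpleGraph.mem_neighborFinset] at h1 h2
      exact ⟨⟨u, huC, x, hxW, h1⟩, ⟨v, hvC, x, hxW, Ne.symm hnot.2, h2⟩⟩
    · rw [SimpleGraph.mem_neighborFinset] at h1 h2
      exact ⟨⟨v, hvC, x, hxW, h1⟩, ⟨u, huC, x, hxW, Ne.symm hnot.1, h2⟩⟩
  have hsum_split : ∑ W ∈ (P (i+1)).erase C, (S ∩ W).card + (S ∩ C).card
      = ∑ W ∈ P (i+1), (S ∩ W).card := Finset.sum_erase_add _ _ hCmem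
  have hRsub : R ⊆ (P (i+1)).erase C := by
    intro W hW
    obtain ⟨hWp, hWC, _⟩ := Finset.mem_filter.mp hW
    exact Finset.mem_erase.mpr ⟨hWC, hWp⟩
  have hzero : ∑ W ∈ (P (i+1)).erase C, (S ∩ W).card = ∑ W ∈ R, (S ∩ W).card := by
    symm
    apply Finset.sum_subset hRsub
    intro W hW hWR
    rcases Finset.eq_empty_or_nonempty (S ∩ W) with he | hne'
    · rw [he, Finset.card_empty]
    · exact absurd (hCin W hW hne') hWR
  have hSC : (S ∩ C).card + 2 ≤ C.card := by
    have hsub : S ∩ C ⊆ (C.erase u).erase v := by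
      intro x hx
      obtain ⟨hxS, hxC⟩ := Finset.mem_inter.mp hx
      have hnot := (Finset.mem_sdiff.mp hxS).2
      simp only [Finset.mem_insert, Finset.mem_singleton, not_or] at hnot
      exact Finset.mem_erase.mpr ⟨hnot.2, Finset.mem_erase.mpr ⟨hnot.1, hxC⟩⟩
    have hc1 := Finset.card_le_card hsub
    have hvCe : v ∈ C.erase u := Finset.mem_erase.mpr ⟨Ne.symm huv, hvC⟩
    rw [Finset.card_erase_of_mem hvCe, Finset.card_erase_of_mem huC] at hc1
    have h2c : 2 ≤ C.card := Finset.one_lt_card.mpr ⟨u, huC, v, hvC, huv⟩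
    omega
  have hWpos : ∀ W ∈ (P (i+1)).erase C, 1 ≤ W.card := fun W hW =>
    Finset.card_pos.mpr (hne1 W (Finset.mem_of_mem_erase hW))
  have hRsum : ∑ W ∈ R, (S ∩ W).card ≤ ∑ W ∈ R, W.card :=
    Finset.sum_le_sum (fun W _ => Finset.card_le_card Finset.inter_subset_right)
  have hRsize : ∑ W ∈ R, W.card ≤ R.card + ∑ W ∈ R, (W.card - 1) := by
    have e1 : ∑ W ∈ R, W.card = ∑ W ∈ R, (W.card - 1 + 1) :=
      Finset.sum_congr rfl (fun W hW => by have := hWpos W (hRsub hW); omega)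
    rw [e1, Finset.sum_add_distrib, Finset.sum_const, smul_eq_mul, mul_one]
    omega
  have hmono : ∑ W ∈ R, (W.card - 1) ≤ ∑ W ∈ (P (i+1)).erase C, (W.card - 1) :=
    Finset.sum_le_sum_of_subset hRsub
  have e2 : ∑ W ∈ (P (i+1)).erase C, (W.card - 1 + 1)
      = ∑ W ∈ (P (i+1)).erase C, W.card :=
    Finset.sum_congr rfl (fun W hW => by have := hWpos W hW; omega)
  have e3 : ∑ W ∈ (P (i+1)).erase C, (W.card - 1 + 1)
      = ∑ W ∈ (P (i+1)).erase C, (W.card - 1) + ((P (i+1)).erase C).card := by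
    rw [Finset.sum_add_distrib, Finset.sum_const, smul_eq_mul, mul_one]
  have e4 : ∑ W ∈ (P (i+1)).erase C, W.card + C.card = ∑ W ∈ P (i+1), W.card :=
    Finset.sum_erase_add _ _ hCmem
  have e5 : ((P (i+1)).erase C).card + 1 = (P (i+1)).card :=
    Finset.card_erase_add_one hCmem
  show S.card ≤ t + i
  omega

lemma redDegree_le_card' (G : SimpleGraph V) (P : Finset (Finset V)) (A : Finset V) :
    redDegree G P A ≤ P.card := by
  have h : {B ∈ (P : Set (Finset V)) | B ≠ A ∧ RedBetween G A B} ⊆ (P : Set (Finset V)) :=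
    fun B hB => hB.1
  calc redDegree G P A ≤ (P : Set (Finset V)).ncard :=
        Set.ncard_le_ncard h (P.finite_toSet)
    _ = P.card := Set.ncard_coe_finset P

lemma exists_contractionSeq (G : SimpleGraph V) (hn : 0 < Fintype.card V) :
    ∃ P t, IsContractionSeqBounded G P t := by
  classical
  set n := Fintype.card V with hn'
  let idx : V → ℕ := fun v => ((Fintype.equivFin V) v : ℕ)
  have idx_inj : Function.Injective idx := by
    intro a b h
    have := Fin.ext (h : ((Fintype.equivFin V) a : ℕ) = _)
    exact (Fintype.equivFin V).injective this
  have idx_lt : ∀ v, idx v < n := fun v => ((Fintype.equivFin V) v).2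
  have idx_surj : ∀ m < n, ∃ v, idx v = m := by
    intro m hm
    exact ⟨(Fintype.equivFin V).symm ⟨m, hm⟩, by simp [idx]⟩
  let P : ℕ → Finset (Finset V) := fun i =>
    insert (Finset.univ.filter (fun v => idx v ≤ i))
      ((Finset.univ.filter (fun v => i < idx v)).image fun v => ({v} : Finset V))
  refine ⟨P, Fintype.card V + 1, ?_, ?_⟩
  · constructor
    · -- P 0 = singletons
      obtain ⟨v0, hv0⟩ := idx_surj 0 hn
      have hQ0 : Finset.univ.filter (fun v => idx v ≤ 0) = {v0} := by
        ext w
        simp only [Finset.mem_filter, Finset.mem_univ, true_and, Finset.mem_singleton,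
          Nat.le_zero]
        constructor
        · intro h; exact idx_inj (h.trans hv0.symm)
        · rintro rfl; exact hv0
      ext S
      simp only [P, hQ0, Finset.mem_insert, Finset.mem_image, Finset.mem_filter,
        Finset.mem_univ, true_and]
      constructor
      · rintro (rfl | ⟨v, _, rfl⟩) <;> exact ⟨_, rfl⟩
      · rintro ⟨v, rfl⟩
        by_cases h : 0 < idx v
        · exact Or.inr ⟨v, h, rfl⟩
        · left
          have : idx v = 0 := by omega
          rw [idx_inj (this.trans hv0.symm)]
    · intro i hi
      obtain ⟨w, hw⟩ := idx_surj (i+1) (by omega)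
      refine ⟨Finset.univ.filter (fun v => idx v ≤ i), Finset.mem_insert_self _ _,
        {w}, ?_, ?_, ?_⟩
      · exact Finset.mem_insert_of_mem (Finset.mem_image_of_mem _
          (by simp [hw]))
      · intro h
        have : w ∈ Finset.univ.filter (fun v => idx v ≤ i) := h ▸ Finset.mem_singleton_self w
        simp only [Finset.mem_filter, hw] at this
        omega
      · have hAT : Finset.univ.filter (fun v => idx v ≤ i) ∉
            ((Finset.univ.filter (fun v => i < idx v)).image fun v => ({v} : Finset V)) := by
          intro h
          obtain ⟨v, hv, hEq⟩ := Finset.mem_image.mp h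
          have hvA : v ∈ Finset.univ.filter (fun v => idx v ≤ i) :=
            hEq ▸ Finset.mem_singleton_self v
          simp only [Finset.mem_filter, Finset.mem_univ, true_and] at hv hvA
          omega
        have hunion : Finset.univ.filter (fun v => idx v ≤ i) ∪ {w}
            = Finset.univ.filter (fun v => idx v ≤ i + 1) := by
          ext v
          simp only [Finset.mem_union, Finset.mem_filter, Finset.mem_univ, true_and,
            Finset.mem_singleton]
          constructor
          · rintro (h | rfl)
            · omega
            · omega
          · intro h
            by_cases h2 : idx v ≤ i
            · exact Or.inl h2
            · exact Or.inr (idx_inj (by omega : idx v = idx w))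
        have herase1 : ((P i).erase (Finset.univ.filter (fun v => idx v ≤ i)))
            = (Finset.univ.filter (fun v => i < idx v)).image fun v => ({v} : Finset V) :=
          Finset.erase_insert hAT
        have herase2 : (((Finset.univ.filter (fun v => i < idx v)).image
              fun v => ({v} : Finset V)).erase {w})
            = (Finset.univ.filter (fun v => i + 1 < idx v)).image fun v => ({v} : Finset V) := by
          ext S
          simp only [Finset.mem_erase, Finset.mem_image, Finset.mem_filter, Finset.mem_univ,
            true_and]
          constructor
          · rintro ⟨hne, v, hv, rfl⟩
            refine ⟨v, ?_, rfl⟩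
            have : v ≠ w := fun h => hne (by rw [h])
            have : idx v ≠ idx w := fun h => this (idx_inj h)
            omega
          · rintro ⟨v, hv, rfl⟩
            refine ⟨?_, v, by omega, rfl⟩
            intro h
            have : v = w := Finset.singleton_injective h
            subst this
            omega
        show P (i + 1) = _
        rw [herase1, herase2, hunion]
  · intro i _ A _
    calc redDegree G (P i) A ≤ (P i).card := redDegree_le_card' G _ _
      _ ≤ _ := by
        refine le_trans (Finset.card_insert_le _ _) ?_
        have := Finset.card_image_le (s := Finset.univ.filter (fun v => i < idx v))
          (f := fun v => ({v} : Finset V))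
        have h2 : (Finset.univ.filter (fun v => i < idx v)).card ≤ Fintype.card V :=
          le_trans (Finset.card_filter_le _ _) (by simp)
        omega




theorem stmt_18 (G : SimpleGraph V) [DecidableRel G.Adj] (b d : ℝ)
    (hb : 0 < b) (hd : 0 < d) (hcard : b + 2 ≤ (Fintype.card V : ℝ))
    (hpairs :
      ({S : Finset V | ∃ u v : V, u ≠ v ∧ S = {u, v} ∧
          (contractionRedDeg G u v : ℝ) < b + d}.ncard : ℝ) < b) :
    (twinWidth G : ℝ) > d := by
  classical
  by_contra hcon
  push_neg at hcon
  set n := Fintype.card V with hn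
  have hn2 : 2 ≤ n := by
    have h2 : (2 : ℝ) ≤ (n : ℝ) := by linarith
    exact_mod_cast h2
  have hsetne : {t : ℕ | ∃ P, IsContractionSeqBounded G P t}.Nonempty := by
    obtain ⟨P, t, h⟩ := exists_contractionSeq G (by omega)
    exact ⟨t, P, h⟩
  obtain ⟨P, hP⟩ := Nat.sInf_mem hsetne
  set t := twinWidth G with ht
  choose! A hA B hB hABne hstep using hP.1.2
  have huex : ∀ i, i < n - 1 → ∃ x, x ∈ A i := fun i hi =>
    (seq_invariant G P hP.1 i (by omega)).2.1 (A i) (hA i hi)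
  have hvex : ∀ i, i < n - 1 → ∃ x, x ∈ B i := fun i hi =>
    (seq_invariant G P hP.1 i (by omega)).2.1 (B i) (hB i hi)
  have hVne : Nonempty V := Fintype.card_pos_iff.mp (by omega)
  choose! u hu using huex
  choose! v hv using hvex
  have huvne : ∀ i, i < n - 1 → u i ≠ v i := by
    intro i hi h
    have hd' : Disjoint (A i) (B i) :=
      (seq_invariant G P hP.1 i (by omega)).2.2.1
        (Finset.mem_coe.mpr (hA i hi)) (Finset.mem_coe.mpr (hB i hi)) (hABne i hi)
    exact (Finset.disjoint_left.mp hd' (hu i hi)) (h ▸ hv i hi)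
  have hbound : ∀ i, i < n - 1 → contractionRedDeg G (u i) (v i) ≤ t + i := by
    intro i hi
    exact step_bound G P t hP hi (hA i hi) (hB i hi) (hABne i hi) (hstep i hi)
      (hu i hi) (hv i hi)
  set pair : ℕ → Finset V := fun i => {u i, v i} with hpair
  have hdistinct : ∀ i j, i < j → j < n - 1 → pair i ≠ pair j := by
    intro i j hij hj heq
    have hCij : A i ∪ B i ∈ P (i + 1) := by
      rw [hstep i (by omega)]; exact Finset.mem_insert_self _ _
    obtain ⟨W', hW', hsub⟩ := seq_mono G P hP.1 (i+1) j (by omega) (by omega)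
      (A i ∪ B i) hCij
    have hpsub : pair i ⊆ W' := by
      intro x hx
      rcases Finset.mem_insert.mp hx with rfl | hx
      · exact hsub (Finset.mem_union_left _ (hu i (by omega)))
      · rw [Finset.mem_singleton] at hx
        exact hsub (hx ▸ Finset.mem_union_right _ (hv i (by omega)))
    have hdisj := (seq_invariant G P hP.1 j (by omega)).2.2.1
    have hujW : u j ∈ W' := hpsub (heq ▸ Finset.mem_insert_self _ _)
    have hvjW : v j ∈ W' := by
      refine hpsub ?_
      rw [heq]
      exact Finset.mem_insert_of_mem (Finset.mem_singleton_self _)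
    have hWA : W' = A j := by
      by_contra h
      exact (Finset.disjoint_left.mp
        (hdisj (Finset.mem_coe.mpr hW') (Finset.mem_coe.mpr (hA j hj)) h) hujW)
        (hu j hj)
    have hWB : W' = B j := by
      by_contra h
      exact (Finset.disjoint_left.mp
        (hdisj (Finset.mem_coe.mpr hW') (Finset.mem_coe.mpr (hB j hj)) h) hvjW)
        (hv j hj)
    exact hABne j hj (hWA ▸ hWB)
  set k := ⌈b⌉₊ with hk
  have hik : ∀ i, i < k → i < n - 1 := by
    intro i hi
    have h1 : (i : ℝ) < b := Nat.lt_ceil.mp hi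
    have h2 : ((i + 2 : ℕ) : ℝ) < (n : ℝ) := by push_cast; linarith
    have h3 : i + 2 < n := by exact_mod_cast h2
    omega
  have htd : (t : ℝ) ≤ d := hcon
  set L := {S : Finset V | ∃ u v : V, u ≠ v ∧ S = {u, v} ∧
      (contractionRedDeg G u v : ℝ) < b + d} with hL
  have hmem : ∀ i, i < k → pair i ∈ L := by
    intro i hi
    have hi' := hik i hi
    refine ⟨u i, v i, huvne i hi', rfl, ?_⟩
    have h1 : (contractionRedDeg G (u i) (v i) : ℝ) ≤ (t : ℝ) + i := by
      have := hbound i hi'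
      exact_mod_cast this
    have h2 : (i : ℝ) < b := Nat.lt_ceil.mp hi
    linarith
  have hinj : Set.InjOn pair ↑(Finset.range k) := by
    intro i hi j hj h
    rw [Finset.coe_range, Set.mem_Iio] at hi hj
    by_contra hne'
    rcases Nat.lt_or_ge i j with hij | hij
    · exact hdistinct i j hij (hik j hj) h
    · exact hdistinct j i (by omega) (hik i hi) h.symm
  have hsub : ↑((Finset.range k).image pair) ⊆ L := by
    intro S hS
    rw [Finset.mem_coe, Finset.mem_image] at hS
    obtain ⟨i, hi, rfl⟩ := hS
    exact hmem i (Finset.mem_range.mp hi)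
  have hkcard : k ≤ L.ncard := by
    calc k = ((Finset.range k).image pair).card := by
          rw [Finset.card_image_of_injOn hinj, Finset.card_range]
      _ = (↑((Finset.range k).image pair) : Set (Finset V)).ncard :=
          (Set.ncard_coe_finset _).symm
      _ ≤ L.ncard := Set.ncard_le_ncard hsub (Set.toFinite L)
  have hfin : (k : ℝ) ≤ (L.ncard : ℝ) := by exact_mod_cast hkcard
  have := Nat.le_ceil b
  rw [hL] at hpairs
  linarith
end
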